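/- Fix ρ > 0 and q ∈ ℕ; for τ ∈ ℝ let χ_τ be the polynomial of degree ≤ q+1 vanishing at all q+1 nodes of the w_τ-Gauß–Radau quadrature (w_τ(x) = e^{−ρτ(x+1)}) and satisfying χ_τ(−1) = 1. For a bounded interval I with a = inf I, b = sup I, |I| = b − a, let φ_I : (−1,1) → I be the affine map x ↦ (a+b)/2 + ((b−a)/2)x. Then for every K ≥ 0: sup over all intervals I ⊆ ℝ with |I| ≤ K of (1/|I|) ∫_I ( χ_{|I|}(φ_I^{−1}(t)) )² e^{−2ρ(t − inf I)} dt is finite. -/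

import Mathlib

/-!
Everything rests on a lower bound `1 + r₀ ≥ c > 0` for the first Gauß–Radau node, uniform in
`|τ| ≤ K`. Given it, `χ_τ(x) = ∏ⱼ (x - rⱼ) / ∏ⱼ (-1 - rⱼ)` is bounded by `(2 / c) ^ (q + 1)` on
`[-1, 1]`, and the averaged integral by the square of this bound times `e^{2|ρ|K}`.

For `q ≥ 1` put `s = ∏_{0 < j < q} (X - rⱼ)`. The quadrature rule applied to `(1 - X)(1 + X)s²` and
to `(1 - X)s²` only sees the node `r₀`, so `1 + r₀ = ∫ (1 - x²) s² w / ∫ (1 - x) s² w`. Since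
`e^{-2|ρ|K} ≤ w_τ ≤ e^{2|ρ|K}`, this quotient is at least `e^{-4|ρ|K}` times the infimum of
`∫ (1 - x²) s² / ∫ (1 - x) s²` over nonzero polynomials of degree `< q`, which is positive by
compactness of the unit sphere in the space of coefficients.
-/

open MeasureTheory Real

/-- A (right-sided) `w`-Gauß–Radau quadrature of order `q`, with pairwise distinct nodes
`-1 < r₀ < ⋯ < r_q = 1`, exact for polynomials of degree at most `2q`. -/
def IsGaussRadauQuad (q : ℕ) (w : ℝ → ℝ) (ω r : Fin (q + 1) → ℝ) : Prop :=
  (∀ j, r j ∈ Set.Ioc (-1 : ℝ) 1) ∧ StrictMono r ∧ r (Fin.last q) = 1 ∧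
    ∀ p : Polynomial ℝ, p.natDegree ≤ 2 * q →
      ∫ x in Set.Ioo (-1 : ℝ) 1, p.eval x * w x = ∑ j, ω j * p.eval (r j)

open Set Polynomial

theorem exists_pos_mul_le_of_homogeneous {E : Type*} [NormedAddCommGroup E] [NormedSpace ℝ E]
    [FiniteDimensional ℝ E] {f g : E → ℝ} (hf : Continuous f) (hg : Continuous g) {k : ℕ}
    (hk : k ≠ 0) (hfk : ∀ (a : ℝ) x, f (a • x) = a ^ k * f x)
    (hgk : ∀ (a : ℝ) x, g (a • x) = a ^ k * g x) (hpos : ∀ x ≠ 0, 0 < f x) :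
    ∃ ε > 0, ∀ x, ε * g x ≤ f x := by
  have hS : IsCompact (Metric.sphere (0 : E) 1) := isCompact_sphere 0 1
  obtain ⟨δ, hδ, hδf⟩ := hS.exists_forall_le' hf.continuousOn (a := 0)
    fun x hx ↦ hpos x (ne_zero_of_mem_unit_sphere ⟨x, hx⟩)
  obtain ⟨M, hM⟩ := hS.bddAbove_image hg.continuousOn
  have hM1 : 0 < max M 1 := lt_max_of_lt_right one_pos
  refine ⟨δ / max M 1, div_pos hδ hM1, fun x ↦ ?_⟩
  rcases eq_or_ne x 0 with rfl | hx
  · have hf0 : f 0 = 0 := by simpa [zero_pow hk] using hfk 0 0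
    have hg0 : g 0 = 0 := by simpa [zero_pow hk] using hgk 0 0
    simp [hf0, hg0]
  set u := ‖x‖⁻¹ • x
  have hu : u ∈ Metric.sphere (0 : E) 1 := by simp [u, norm_smul, hx]
  have hxu : x = ‖x‖ • u := by simp [u, smul_smul, hx]
  have hgu : g u ≤ max M 1 := (hM ⟨u, hu, rfl⟩).trans (le_max_left _ _)
  have hfu : δ / max M 1 * g u ≤ f u := by
    calc δ / max M 1 * g u ≤ δ / max M 1 * max M 1 := by gcongr
      _ = δ := div_mul_cancel₀ _ hM1.ne'
      _ ≤ f u := hδf u hu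
  rw [hxu, hfk, hgk]
  calc δ / max M 1 * (‖x‖ ^ k * g u) = ‖x‖ ^ k * (δ / max M 1 * g u) := by ring
    _ ≤ ‖x‖ ^ k * f u := by gcongr

theorem integral_mul_eval_sq_pos {a b : ℝ} (hab : a < b) {u : ℝ → ℝ} (hu : Continuous u)
    (hpos : ∀ x ∈ Ioo a b, 0 < u x) {p : ℝ[X]} (hp : p ≠ 0) :
    0 < ∫ x in Ioo a b, u x * p.eval x ^ 2 := by
  have hnn : 0 ≤ᵐ[volume.restrict (Ioo a b)] fun x ↦ u x * p.eval x ^ 2 := by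
    filter_upwards [ae_restrict_mem measurableSet_Ioo] with x hx
    exact mul_nonneg (hpos x hx).le (sq_nonneg _)
  have hint : IntegrableOn (fun x ↦ u x * p.eval x ^ 2) (Ioo a b) :=
    (Continuous.integrableOn_Icc (by fun_prop)).mono_set Ioo_subset_Icc_self
  rw [setIntegral_pos_iff_support_of_nonneg_ae hnn hint]
  have hroots : volume {x : ℝ | p.IsRoot x} = 0 := (finite_setOfPred_isRoot hp).measure_zero _
  calc (0 : ENNReal) < volume (Ioo a b) := by simpa using hab
    _ = volume (Ioo a b \ {x | p.IsRoot x}) := (measure_sdiff_null hroots).symm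
    _ ≤ _ := by
      refine measure_mono fun x ⟨hx, hx0⟩ ↦ ⟨?_, hx⟩
      exact mul_ne_zero (hpos x hx).ne' (pow_ne_zero _ hx0)

theorem exists_pos_mul_integral_mul_eval_sq_le (n : ℕ) {a b : ℝ} (hab : a < b) {u v : ℝ → ℝ}
    (hu : Continuous u) (hv : Continuous v) (hpos : ∀ x ∈ Ioo a b, 0 < u x) :
    ∃ ε > 0, ∀ s : ℝ[X], s.degree < n →
      ε * ∫ x in Ioo a b, v x * s.eval x ^ 2 ≤ ∫ x in Ioo a b, u x * s.eval x ^ 2 := by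
  let P : (Fin n → ℝ) →ₗ[ℝ] ℝ[X] := (degreeLT ℝ n).subtype ∘ₗ (degreeLTEquiv ℝ n).symm.toLinearMap
  have hP : ∀ c x, (P c).eval x = ∑ i, c i * x ^ (i : ℕ) := fun c x ↦ by
    simp [P, eval_eq_sum_degreeLTEquiv ((degreeLTEquiv ℝ n).symm c).2]
  let F : (ℝ → ℝ) → (Fin n → ℝ) → ℝ := fun w c ↦ ∫ x in Ioo a b, w x * (P c).eval x ^ 2
  have hcont : ∀ w, Continuous w → Continuous (F w) := fun w hw ↦ by
    simp only [F, hP, ← integral_Icc_eq_integral_Ioo]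
    exact continuous_parametric_integral_of_continuous (by fun_prop) isCompact_Icc
  have hhom : ∀ w (t : ℝ) c, F w (t • c) = t ^ 2 * F w c := fun w t c ↦ by
    simp only [F, map_smul, eval_smul, smul_eq_mul, ← integral_const_mul]
    congr 1 with x
    ring
  obtain ⟨ε, hε, hle⟩ := exists_pos_mul_le_of_homogeneous (hcont u hu) (hcont v hv) two_ne_zero
    (hhom u) (hhom v) fun c hc ↦ integral_mul_eval_sq_pos hab hu hpos (by simpa [P] using hc)
  refine ⟨ε, hε, fun s hs ↦ ?_⟩
  have hs' : s = P (degreeLTEquiv ℝ n ⟨s, mem_degreeLT.2 hs⟩) := by simp [P]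
  rw [hs']
  exact hle _

theorem Polynomial.exists_eq_C_mul_prod_X_sub_C {K ι : Type*} [Field K] [Fintype ι]
    {r : ι → K} (hr : Function.Injective r) {p : K[X]} (hp : p.natDegree ≤ Fintype.card ι)
    (hroot : ∀ i, p.IsRoot (r i)) : ∃ a, p = C a * ∏ i, (X - C (r i)) := by
  obtain ⟨g, hg⟩ : ∏ i, (X - C (r i)) ∣ p :=
    Finset.prod_dvd_of_coprime ((pairwise_coprime_X_sub_C hr).set_pairwise _)
      fun i _ ↦ dvd_iff_isRoot.2 (hroot i)
  rcases eq_or_ne g 0 with rfl | hg0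
  · exact ⟨0, by simpa using hg⟩
  have hmonic : (∏ i, (X - C (r i))).Monic := monic_prod_of_monic _ _ fun i _ ↦ monic_X_sub_C _
  have hdeg : p.natDegree = Fintype.card ι + g.natDegree := by
    rw [hg, natDegree_mul hmonic.ne_zero hg0, natDegree_prod_of_monic _ _ fun i _ ↦
      monic_X_sub_C _]
    simp
  refine ⟨g.coeff 0, ?_⟩
  rw [hg, mul_comm, ← eq_C_of_natDegree_eq_zero (by omega)]

theorem abs_eval_le_of_eval_neg_one_eq_one {ι : Type*} [Fintype ι] {r : ι → ℝ}
    (hr : Function.Injective r) {p : ℝ[X]} (hp : p.natDegree ≤ Fintype.card ι)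
    (hroot : ∀ i, p.eval (r i) = 0) (hp1 : p.eval (-1) = 1) {c : ℝ} (hc : 0 < c)
    (hcr : ∀ i, c ≤ 1 + r i) (hr1 : ∀ i, r i ≤ 1) {x : ℝ} (hx : x ∈ Icc (-1 : ℝ) 1) :
    |p.eval x| ≤ (2 / c) ^ Fintype.card ι := by
  obtain ⟨a, rfl⟩ := exists_eq_C_mul_prod_X_sub_C hr hp hroot
  simp only [eval_mul, eval_C, eval_prod, eval_sub, eval_X] at hp1 ⊢
  have hden : |a| * ∏ i, (1 + r i) = 1 := by
    calc |a| * ∏ i, (1 + r i) = |a * ∏ i, (-1 - r i)| := by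
          rw [abs_mul, Finset.abs_prod]
          congr 2 with i
          rw [abs_of_nonpos (by linarith [hcr i])]
          ring
      _ = 1 := by rw [hp1, abs_one]
  have hnum : ∏ i, |x - r i| ≤ 2 ^ Fintype.card ι := by
    rw [← Finset.card_univ, ← Finset.prod_const]
    refine Finset.prod_le_prod (fun i _ ↦ abs_nonneg _) fun i _ ↦ abs_le.2 ⟨?_, ?_⟩
    · linarith [hr1 i, hx.1]
    · linarith [hcr i, hx.2]
  have hden' : c ^ Fintype.card ι ≤ ∏ i, (1 + r i) := by
    rw [← Finset.card_univ, ← Finset.prod_const]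
    exact Finset.prod_le_prod (fun i _ ↦ hc.le) fun i _ ↦ hcr i
  have ha : |a| = (∏ i, (1 + r i))⁻¹ := eq_inv_of_mul_eq_one_left hden
  rw [abs_mul, Finset.abs_prod, ha, div_pow, div_eq_mul_inv, mul_comm]
  exact mul_le_mul hnum (inv_anti₀ (by positivity) hden') (ha ▸ abs_nonneg a) (by positivity)

namespace IsGaussRadauQuad

variable {q : ℕ} {w : ℝ → ℝ} {ω r : Fin (q + 1) → ℝ}

theorem integral_one_sub_sq_mul_eq (h : IsGaussRadauQuad q w ω r) {s : ℝ[X]}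
    (hs : s.natDegree < q) (hsr : ∀ j, j ≠ 0 → j ≠ Fin.last q → s.eval (r j) = 0) :
    ∫ x in Ioo (-1 : ℝ) 1, (1 - x ^ 2) * s.eval x ^ 2 * w x =
      (1 + r 0) * ∫ x in Ioo (-1 : ℝ) 1, (1 - x) * s.eval x ^ 2 * w x := by
  obtain ⟨-, -, hlast, hquad⟩ := h
  have hnode : ∀ t : ℝ[X], t.natDegree ≤ 1 →
      ∫ x in Ioo (-1 : ℝ) 1, ((1 - X) * s ^ 2 * t).eval x * w x =
        ω 0 * ((1 - X) * s ^ 2 * t).eval (r 0) := by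
    intro t ht
    have h1X : (1 - X : ℝ[X]).natDegree ≤ 1 := by compute_degree
    have hdeg : ((1 - X) * s ^ 2 * t).natDegree ≤ 2 * q := by
      refine natDegree_mul_le.trans ?_
      have := natDegree_mul_le (p := 1 - X) (q := s ^ 2)
      have := natDegree_pow_le (p := s) (n := 2)
      omega
    rw [hquad _ hdeg, Finset.sum_eq_single 0 _ (by simp)]
    intro j _ hj0
    rcases eq_or_ne j (Fin.last q) with rfl | hjl
    · simp [hlast]
    · simp [hsr j hj0 hjl]
  have h1 := hnode (1 + X) (by compute_degree)
  have h2 := hnode 1 (by simp)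
  simp only [eval_mul, eval_sub, eval_add, eval_one, eval_X, eval_pow, mul_one] at h1 h2
  calc ∫ x in Ioo (-1 : ℝ) 1, (1 - x ^ 2) * s.eval x ^ 2 * w x
        = ∫ x in Ioo (-1 : ℝ) 1, (1 - x) * s.eval x ^ 2 * (1 + x) * w x := by
          congr 1 with x
          ring
    _ = (1 + r 0) * (ω 0 * ((1 - r 0) * s.eval (r 0) ^ 2)) := by rw [h1]; ring
    _ = _ := by rw [h2]

theorem mul_le_mul_one_add_node_zero (h : IsGaussRadauQuad q w ω r) (hq : 0 < q)
    (hw : Continuous w) {m M ε : ℝ} (hm : 0 ≤ m) (hwm : ∀ x ∈ Ioo (-1 : ℝ) 1, m ≤ w x)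
    (hwM : ∀ x ∈ Ioo (-1 : ℝ) 1, w x ≤ M)
    (hε : ∀ s : ℝ[X], s.degree < q → ε * ∫ x in Ioo (-1 : ℝ) 1, (1 - x) * s.eval x ^ 2 ≤
      ∫ x in Ioo (-1 : ℝ) 1, (1 - x ^ 2) * s.eval x ^ 2) :
    m * ε ≤ M * (1 + r 0) := by
  set s : ℝ[X] := ∏ j ∈ Finset.Ioo 0 (Fin.last q), (X - C (r j))
  have hs : s.natDegree = q - 1 := by
    rw [natDegree_prod_of_monic _ _ fun j _ ↦ monic_X_sub_C _]
    simp [Fin.card_Ioo]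
  have hs0 : s ≠ 0 := (monic_prod_of_monic _ _ fun j _ ↦ monic_X_sub_C _).ne_zero
  have hsr : ∀ j, j ≠ 0 → j ≠ Fin.last q → s.eval (r j) = 0 := fun j hj0 hjl ↦ by
    rw [eval_prod]
    refine Finset.prod_eq_zero (Finset.mem_Ioo.2 ⟨Fin.pos_of_ne_zero hj0,
      (Fin.le_last j).lt_of_ne hjl⟩) (by simp)
  have hr0 : 0 ≤ 1 + r 0 := by linarith [(h.1 0).1]
  have hint : ∀ f : ℝ → ℝ, Continuous f → IntegrableOn f (Ioo (-1 : ℝ) 1) := fun f hf ↦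
    hf.integrableOn_Icc.mono_set Ioo_subset_Icc_self
  set B := ∫ x in Ioo (-1 : ℝ) 1, (1 - x) * s.eval x ^ 2
  have hB : 0 < B := integral_mul_eval_sq_pos (by norm_num) (by fun_prop)
    (fun x hx ↦ by linarith [hx.2]) hs0
  refine le_of_mul_le_mul_right ?_ hB
  calc m * ε * B ≤ m * ∫ x in Ioo (-1 : ℝ) 1, (1 - x ^ 2) * s.eval x ^ 2 := by
        rw [mul_assoc]
        exact mul_le_mul_of_nonneg_left (hε s ((degree_le_natDegree).trans_lt (by
          exact_mod_cast (show s.natDegree < q by omega)))) hm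
    _ ≤ ∫ x in Ioo (-1 : ℝ) 1, (1 - x ^ 2) * s.eval x ^ 2 * w x := by
        rw [← integral_const_mul]
        refine setIntegral_mono_on (hint _ (by fun_prop)) (hint _ (by fun_prop))
          measurableSet_Ioo fun x hx ↦ ?_
        have : 0 ≤ (1 - x ^ 2) * s.eval x ^ 2 :=
          mul_nonneg (by nlinarith [hx.1, hx.2]) (sq_nonneg _)
        nlinarith [hwm x hx]
    _ = (1 + r 0) * ∫ x in Ioo (-1 : ℝ) 1, (1 - x) * s.eval x ^ 2 * w x :=
        h.integral_one_sub_sq_mul_eq (by omega) hsr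
    _ ≤ (1 + r 0) * ∫ x in Ioo (-1 : ℝ) 1, M * ((1 - x) * s.eval x ^ 2) := by
        refine mul_le_mul_of_nonneg_left ?_ hr0
        refine setIntegral_mono_on (hint _ (by fun_prop)) (hint _ (by fun_prop))
          measurableSet_Ioo fun x hx ↦ ?_
        have : 0 ≤ (1 - x) * s.eval x ^ 2 := mul_nonneg (by linarith [hx.2]) (sq_nonneg _)
        nlinarith [hwM x hx]
    _ = M * (1 + r 0) * B := by rw [integral_const_mul]; ring

end IsGaussRadauQuad

theorem exists_pos_le_one_add_node_of_exp_weight (ρ : ℝ) (q : ℕ) (ω r : ℝ → Fin (q + 1) → ℝ)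
    (hGR : ∀ τ : ℝ, IsGaussRadauQuad q (fun x => exp (-ρ * τ * (x + 1))) (ω τ) (r τ)) (K : ℝ) :
    ∃ c > 0, ∀ τ, |τ| ≤ K → ∀ j, c ≤ 1 + r τ j := by
  obtain ⟨ε, hε, hεs⟩ := exists_pos_mul_integral_mul_eval_sq_le q (a := -1) (b := 1)
    (u := fun x ↦ 1 - x ^ 2) (v := fun x ↦ 1 - x) (by norm_num) (by fun_prop) (by fun_prop)
    fun x hx ↦ by nlinarith [hx.1, hx.2]
  set L := 2 * |ρ| * K
  refine ⟨min (exp (-2 * L) * ε) 2, lt_min (by positivity) two_pos, fun τ hτ j ↦ ?_⟩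
  obtain ⟨-, hmono, hlast, -⟩ := hGR τ
  rcases Nat.eq_zero_or_pos q with rfl | hq
  · rw [Subsingleton.elim (α := Fin 1) j (Fin.last 0), hlast]
    linarith [min_le_right (exp (-2 * L) * ε) 2]
  have hexp : ∀ x ∈ Ioo (-1 : ℝ) 1, |-ρ * τ * (x + 1)| ≤ L := fun x hx ↦ by
    rw [abs_mul, abs_mul, abs_neg, abs_of_pos (by linarith [hx.1] : 0 < x + 1)]
    calc |ρ| * |τ| * (x + 1) ≤ |ρ| * K * 2 :=
          mul_le_mul (by gcongr) (by linarith [hx.2]) (by linarith [hx.1])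
            (mul_nonneg (abs_nonneg ρ) ((abs_nonneg τ).trans hτ))
      _ = L := by ring
  have hnode := (hGR τ).mul_le_mul_one_add_node_zero hq (by fun_prop) (exp_pos (-L)).le
    (fun x hx ↦ exp_le_exp.2 (neg_le_of_abs_le (hexp x hx)))
    (fun x hx ↦ exp_le_exp.2 (le_of_abs_le (hexp x hx))) hεs
  have hfirst : exp (-2 * L) * ε ≤ 1 + r τ 0 := by
    refine le_of_mul_le_mul_left ?_ (exp_pos L)
    calc exp L * (exp (-2 * L) * ε) = exp (-L) * ε := by
          rw [← mul_assoc, ← exp_add]; ring_nf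
      _ ≤ exp L * (1 + r τ 0) := hnode
  calc min (exp (-2 * L) * ε) 2 ≤ exp (-2 * L) * ε := min_le_left _ _
    _ ≤ 1 + r τ 0 := hfirst
    _ ≤ 1 + r τ j := by gcongr; exact hmono.monotone (Fin.zero_le j)

theorem stmt_18_general (ρ : ℝ) (q : ℕ)
    (ω r : ℝ → Fin (q + 1) → ℝ)
    (hGR : ∀ τ : ℝ,
      IsGaussRadauQuad q (fun x => Real.exp (-ρ * τ * (x + 1))) (ω τ) (r τ))
    (χ : ℝ → Polynomial ℝ)
    (hχdeg : ∀ τ, (χ τ).natDegree ≤ q + 1)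
    (hχ0 : ∀ τ, ∀ j, (χ τ).eval (r τ j) = 0)
    (hχ1 : ∀ τ, (χ τ).eval (-1) = 1)
    (K : ℝ) :
    ∃ C : ℝ, ∀ a b : ℝ, a < b → b - a ≤ K →
      (1 / (b - a)) * ∫ t in Set.Ioo a b,
          ((χ (b - a)).eval ((2 * t - (a + b)) / (b - a))) ^ 2 *
            Real.exp (-2 * ρ * (t - a)) ≤ C := by
  obtain ⟨c, hc, hcr⟩ := exists_pos_le_one_add_node_of_exp_weight ρ q ω r hGR K
  set C := ((2 / c) ^ (q + 1)) ^ 2 * exp (2 * |ρ| * K)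
  refine ⟨C, fun a b hab hK ↦ ?_⟩
  have hba : 0 < b - a := sub_pos.2 hab
  have hbound : ∀ t ∈ Ioo a b, ‖(χ (b - a)).eval ((2 * t - (a + b)) / (b - a)) ^ 2 *
      exp (-2 * ρ * (t - a))‖ ≤ C := fun t ht ↦ by
    have hy : (2 * t - (a + b)) / (b - a) ∈ Icc (-1 : ℝ) 1 := by
      rw [mem_Icc, le_div_iff₀ hba, div_le_one hba]
      constructor <;> linarith [ht.1, ht.2]
    have hχy := abs_eval_le_of_eval_neg_one_eq_one (hGR _).2.1.injective
      (by simpa using hχdeg (b - a)) (hχ0 _) (hχ1 _) hc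
      (hcr _ (by rwa [abs_of_pos hba])) (fun j ↦ ((hGR _).1 j).2) hy
    rw [Fintype.card_fin] at hχy
    rw [norm_mul, norm_pow, Real.norm_eq_abs, Real.norm_eq_abs, abs_exp]
    show _ ≤ ((2 / c) ^ (q + 1)) ^ 2 * exp (2 * |ρ| * K)
    gcongr ?_ ^ 2 * exp ?_
    nlinarith [mul_nonneg (by linarith [neg_abs_le ρ] : 0 ≤ |ρ| + ρ) (sub_pos.2 ht.1).le,
      mul_nonneg (abs_nonneg ρ) (by linarith [ht.2] : 0 ≤ K - (t - a))]
  rw [one_div, inv_mul_le_iff₀ hba]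
  calc _ ≤ ‖∫ t in Ioo a b, (χ (b - a)).eval ((2 * t - (a + b)) / (b - a)) ^ 2 *
          exp (-2 * ρ * (t - a))‖ := Real.le_norm_self _
    _ ≤ C * volume.real (Ioo a b) := norm_setIntegral_le_of_norm_le_const measure_Ioo_lt_top hbound
    _ = (b - a) * C := by rw [Real.volume_real_Ioo_of_le hab.le, mul_comm]

/-- Corollary `c:chi2`: with `w_τ(x) = exp(-ρτ(x+1))`, `χ_τ` the polynomial of degree
`≤ q+1` vanishing at the Gauß–Radau nodes of `w_τ` with `χ_τ(-1) = 1`, and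
`φ_I : (-1,1) → I` the affine parametrisation of a bounded interval `I = (a,b)`, the
quantities `(1/|I|) ∫_I χ_{|I|}(φ_I⁻¹(t))² e^{-2ρ(t - inf I)} dt` are bounded uniformly
over all intervals `I` with `|I| ≤ K`. -/
theorem stmt_18 (ρ : ℝ) (hρ : 0 < ρ) (q : ℕ)
    (ω r : ℝ → Fin (q + 1) → ℝ)
    (hGR : ∀ τ : ℝ,
      IsGaussRadauQuad q (fun x => Real.exp (-ρ * τ * (x + 1))) (ω τ) (r τ))
    (χ : ℝ → Polynomial ℝ)
    (hχdeg : ∀ τ, (χ τ).natDegree ≤ q + 1)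
    (hχ0 : ∀ τ, ∀ j, (χ τ).eval (r τ j) = 0)
    (hχ1 : ∀ τ, (χ τ).eval (-1) = 1)
    (K : ℝ) (hK : 0 ≤ K) :
    ∃ C : ℝ, ∀ a b : ℝ, a < b → b - a ≤ K →
      (1 / (b - a)) * ∫ t in Set.Ioo a b,
          ((χ (b - a)).eval ((2 * t - (a + b)) / (b - a))) ^ 2 *
            Real.exp (-2 * ρ * (t - a)) ≤ C :=
  stmt_18_general ρ q ω r hGR χ hχdeg hχ0 hχ1 K
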